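/- arXiv:math/9806148 — 4 statements merged into one kernel-verified Lean document; each statement's English description precedes it below -/
import Mathlib

section
/- Every element of a coalgebra C over a field k is contained in a finite-dimensional subcoalgebra of C. -/
open TensorProduct

namespace FTCAux

open LinearMap Coalgebra

variable {k C : Type*} [Field k] [AddCommGroup C] [Module k C]

section ex

variable (M : Type*) [AddCommGroup M] [Module k M]

/-- Contract a functional against the left tensor factor. -/
noncomputable def lex (f : C →ₗ[k] k) : C ⊗[k] M →ₗ[k] M :=
  (TensorProduct.lid k M).toLinearMap ∘ₗ f.rTensor M

/-- Contract a functional against the right tensor factor. -/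
noncomputable def rex (f : C →ₗ[k] k) : M ⊗[k] C →ₗ[k] M :=
  (TensorProduct.rid k M).toLinearMap ∘ₗ f.lTensor M

@[simp] lemma lex_tmul (f : C →ₗ[k] k) (x : C) (m : M) :
    lex M f (x ⊗ₜ[k] m) = f x • m := by
  simp [lex]

@[simp] lemma rex_tmul (f : C →ₗ[k] k) (m : M) (x : C) :
    rex M f (m ⊗ₜ[k] x) = f x • m := by
  simp [rex]

end ex

variable {M N : Type*} [AddCommGroup M] [Module k M] [AddCommGroup N] [Module k N]

lemma lex_natural (f : C →ₗ[k] k) (g : M →ₗ[k] N) :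
    lex N f ∘ₗ g.lTensor C = g ∘ₗ lex M f :=
  TensorProduct.ext' fun x m => by simp

lemma rex_natural (f : C →ₗ[k] k) (g : M →ₗ[k] N) :
    rex N f ∘ₗ g.rTensor C = g ∘ₗ rex M f :=
  TensorProduct.ext' fun m x => by simp

lemma lTensor_rex_assoc (f : C →ₗ[k] k) :
    (rex C f).lTensor C ∘ₗ (TensorProduct.assoc k C C C).toLinearMap
      = rex (C ⊗[k] C) f := by
  apply TensorProduct.ext_threefold
  intro x y z
  simp [tmul_smul]

lemma rTensor_lex_assoc (f : C →ₗ[k] k) :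
    lex (C ⊗[k] C) f ∘ₗ (TensorProduct.assoc k C C C).toLinearMap
      = (lex C f).rTensor C := by
  apply TensorProduct.ext_threefold
  intro x y z
  simp [smul_tmul']

lemma rex_comp_assoc_symm (f : C →ₗ[k] k) :
    rex (C ⊗[k] C) f ∘ₗ ((TensorProduct.assoc k C C C).symm :
        C ⊗[k] (C ⊗[k] C) →ₗ[k] (C ⊗[k] C) ⊗[k] C)
      = (rex C f).lTensor C := by
  rw [← lTensor_rex_assoc f, LinearMap.comp_assoc, LinearEquiv.comp_coe,
    LinearEquiv.symm_trans_self, LinearEquiv.refl_toLinearMap, LinearMap.comp_id]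

section coalg

variable [Coalgebra k C]

/-- `x ↦ (id ⊗ f)(Δ x)`. -/
noncomputable def Lc (f : C →ₗ[k] k) : C →ₗ[k] C := rex C f ∘ₗ comul

/-- `x ↦ (f ⊗ id)(Δ x)`. -/
noncomputable def Rc (f : C →ₗ[k] k) : C →ₗ[k] C := lex C f ∘ₗ comul

lemma Lc_apply (f : C →ₗ[k] k) (x : C) : Lc f x = rex C f (comul x) := rfl

lemma Rc_apply (f : C →ₗ[k] k) (x : C) : Rc f x = lex C f (comul x) := rfl

lemma comul_comp_Lc (f : C →ₗ[k] k) :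
    comul (R := k) ∘ₗ Lc f = (Lc f).lTensor C ∘ₗ comul := by
  simp only [Lc]
  rw [← LinearMap.comp_assoc, ← rex_natural, LinearMap.comp_assoc,
    ← Coalgebra.coassoc_symm, ← LinearMap.comp_assoc, rex_comp_assoc_symm,
    ← LinearMap.comp_assoc, ← LinearMap.lTensor_comp]

lemma comul_comp_Rc (f : C →ₗ[k] k) :
    comul (R := k) ∘ₗ Rc f = (Rc f).rTensor C ∘ₗ comul := by
  simp only [Rc]
  rw [← LinearMap.comp_assoc, ← lex_natural, LinearMap.comp_assoc,
    ← Coalgebra.coassoc, ← LinearMap.comp_assoc, rTensor_lex_assoc,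
    ← LinearMap.comp_assoc, ← LinearMap.rTensor_comp]

lemma comul_Lc (f : C →ₗ[k] k) (x : C) :
    comul (R := k) (Lc f x) = (Lc f).lTensor C (comul x) := by
  have h := LinearMap.congr_fun (comul_comp_Lc f) x
  simpa only [LinearMap.comp_apply] using h

lemma comul_Rc (f : C →ₗ[k] k) (x : C) :
    comul (R := k) (Rc f x) = (Rc f).rTensor C (comul x) := by
  have h := LinearMap.congr_fun (comul_comp_Rc f) x
  simpa only [LinearMap.comp_apply] using h

lemma exchange (f g : C →ₗ[k] k) (x : C) :
    Lc g (Rc f x) = Rc f (Lc g x) := by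
  rw [Lc_apply, comul_Rc]
  have h := LinearMap.congr_fun (rex_natural g (Rc f)) (comul (R := k) x)
  simp only [LinearMap.comp_apply] at h
  rw [h, Lc_apply]

lemma rex_counit_comul (x : C) : rex C (counit (R := k)) (comul x) = x := by
  simp only [rex, LinearMap.comp_apply, Coalgebra.lTensor_counit_comul]
  simp

lemma lex_counit_comul (x : C) : lex C (counit (R := k)) (comul x) = x := by
  simp only [lex, LinearMap.comp_apply, Coalgebra.rTensor_counit_comul]
  simp

end coalg

/-- Basis expansion of an element of `C ⊗ C` in either tensor factor. -/
lemma expand {ι : Type*} (B : Module.Basis ι k C) (t : C ⊗[k] C) :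
    ∃ s : Finset ι,
      (∀ α ∉ s, lex C (B.coord α) t = 0) ∧
      (∀ β ∉ s, rex C (B.coord β) t = 0) ∧
      t = ∑ α ∈ s, B α ⊗ₜ[k] lex C (B.coord α) t ∧
      t = ∑ β ∈ s, rex C (B.coord β) t ⊗ₜ[k] B β := by
  classical
  induction t using TensorProduct.induction_on with
  | zero => exact ⟨∅, by simp, by simp, by simp, by simp⟩
  | tmul x y =>
      refine ⟨(B.repr x).support ∪ (B.repr y).support, ?_, ?_, ?_, ?_⟩
      · intro α hα
        have hx : B.repr x α = 0 :=
          Finsupp.notMem_support_iff.1 fun h => hα (Finset.mem_union_left _ h)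
        rw [lex_tmul, Module.Basis.coord_apply, hx, zero_smul]
      · intro β hβ
        have hy : B.repr y β = 0 :=
          Finsupp.notMem_support_iff.1 fun h => hβ (Finset.mem_union_right _ h)
        rw [rex_tmul, Module.Basis.coord_apply, hy, zero_smul]
      · have hx : ∑ α ∈ (B.repr x).support ∪ (B.repr y).support,
            B.repr x α • B α = x := by
          have h := B.linearCombination_repr x
          rwa [Finsupp.linearCombination_apply, Finsupp.sum_of_support_subset _
            Finset.subset_union_left _ (fun i _ => zero_smul k (B i))] at h
        conv_lhs => rw [← hx]
        rw [TensorProduct.sum_tmul]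
        exact Finset.sum_congr rfl fun α _ => by
          rw [lex_tmul, Module.Basis.coord_apply, TensorProduct.smul_tmul]
      · have hy : ∑ β ∈ (B.repr x).support ∪ (B.repr y).support,
            B.repr y β • B β = y := by
          have h := B.linearCombination_repr y
          rwa [Finsupp.linearCombination_apply, Finsupp.sum_of_support_subset _
            Finset.subset_union_right _ (fun i _ => zero_smul k (B i))] at h
        conv_lhs => rw [← hy]
        rw [TensorProduct.tmul_sum]
        exact Finset.sum_congr rfl fun β _ => by
          rw [rex_tmul, Module.Basis.coord_apply, TensorProduct.tmul_smul,
            TensorProduct.smul_tmul, TensorProduct.tmul_smul]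
  | add t1 t2 ih1 ih2 =>
      obtain ⟨s1, hz1, hz1', he1, he1'⟩ := ih1
      obtain ⟨s2, hz2, hz2', he2, he2'⟩ := ih2
      refine ⟨s1 ∪ s2, ?_, ?_, ?_, ?_⟩
      · intro α hα
        rw [map_add, hz1 α fun h => hα (Finset.mem_union_left _ h),
          hz2 α fun h => hα (Finset.mem_union_right _ h), add_zero]
      · intro β hβ
        rw [map_add, hz1' β fun h => hβ (Finset.mem_union_left _ h),
          hz2' β fun h => hβ (Finset.mem_union_right _ h), add_zero]
      · have e1 : t1 = ∑ α ∈ s1 ∪ s2, B α ⊗ₜ[k] lex C (B.coord α) t1 := by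
          conv_lhs => rw [he1]
          exact Finset.sum_subset Finset.subset_union_left fun α _ hα => by
            rw [hz1 α hα, TensorProduct.tmul_zero]
        have e2 : t2 = ∑ α ∈ s1 ∪ s2, B α ⊗ₜ[k] lex C (B.coord α) t2 := by
          conv_lhs => rw [he2]
          exact Finset.sum_subset Finset.subset_union_right fun α _ hα => by
            rw [hz2 α hα, TensorProduct.tmul_zero]
        conv_lhs => rw [e1, e2]
        rw [← Finset.sum_add_distrib]
        exact Finset.sum_congr rfl fun α _ => by rw [map_add, TensorProduct.tmul_add]
      · have e1 : t1 = ∑ β ∈ s1 ∪ s2, rex C (B.coord β) t1 ⊗ₜ[k] B β := by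
          conv_lhs => rw [he1']
          exact Finset.sum_subset Finset.subset_union_left fun β _ hβ => by
            rw [hz1' β hβ, TensorProduct.zero_tmul]
        have e2 : t2 = ∑ β ∈ s1 ∪ s2, rex C (B.coord β) t2 ⊗ₜ[k] B β := by
          conv_lhs => rw [he2']
          exact Finset.sum_subset Finset.subset_union_right fun β _ hβ => by
            rw [hz2' β hβ, TensorProduct.zero_tmul]
        conv_lhs => rw [e1, e2]
        rw [← Finset.sum_add_distrib]
        exact Finset.sum_congr rfl fun β _ => by rw [map_add, TensorProduct.add_tmul]

/-- Over a field, `(D ⊗ C) ∩ (C ⊗ D) ⊆ D ⊗ D` inside `C ⊗ C`. -/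
lemma mem_range_map {D : Submodule k C} {x : C ⊗[k] C}
    (h1 : x ∈ LinearMap.range (D.subtype.rTensor C))
    (h2 : x ∈ LinearMap.range (D.subtype.lTensor C)) :
    x ∈ LinearMap.range (TensorProduct.map D.subtype D.subtype) := by
  obtain ⟨π, hπ⟩ := D.subtype.exists_leftInverse_of_injective D.ker_subtype
  obtain ⟨y, hy⟩ := h1
  obtain ⟨z, hz⟩ := h2
  have hfix : (D.subtype ∘ₗ π).lTensor C x = x := by
    rw [← hz, ← LinearMap.lTensor_comp_apply, LinearMap.comp_assoc, hπ,
      LinearMap.comp_id]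
  have hcomp : TensorProduct.map D.subtype D.subtype ∘ₗ π.lTensor D
      = (D.subtype ∘ₗ π).lTensor C ∘ₗ D.subtype.rTensor C :=
    TensorProduct.ext' fun d c => by simp
  refine ⟨π.lTensor D y, ?_⟩
  have h := LinearMap.congr_fun hcomp y
  simp only [LinearMap.comp_apply] at h
  rw [h, hy, hfix]

end FTCAux

open FTCAux LinearMap Coalgebra in
/-- Every element of a coalgebra `C` over a field `k` is contained in a
finite-dimensional subcoalgebra of `C` (a subspace `D` with `Δ(D) ⊆ D ⊗ D`). -/
theorem stmt_0 {k C : Type*} [Field k] [AddCommGroup C] [Module k C] [Coalgebra k C]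
    (c : C) :
    ∃ D : Submodule k C, FiniteDimensional k D ∧ c ∈ D ∧
      ∀ x ∈ D, CoalgebraStruct.comul (R := k) x ∈
        LinearMap.range (TensorProduct.map D.subtype D.subtype) := by
  classical
  set B := Module.Basis.ofVectorSpace k C with hB
  obtain ⟨s, hz1, hz2, he1, he2⟩ := expand B (comul (R := k) c)
  have he1' : comul (R := k) c = ∑ α ∈ s, B α ⊗ₜ[k] Rc (B.coord α) c := by
    rw [he1]
    exact Finset.sum_congr rfl fun α _ => by rw [← Rc_apply]
  have he2' : comul (R := k) c = ∑ β ∈ s, Lc (B.coord β) c ⊗ₜ[k] B β := by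
    rw [he2]
    exact Finset.sum_congr rfl fun β _ => by rw [← Lc_apply]
  set D := Submodule.span k
    (Set.image2 (fun α β => Lc (B.coord β) (Rc (B.coord α) c)) ↑s ↑s) with hD
  have hdmem : ∀ α ∈ s, ∀ β ∈ s, Lc (B.coord β) (Rc (B.coord α) c) ∈ D := fun α hα β hβ =>
    Submodule.subset_span (Set.mem_image2_of_mem hα hβ)
  -- key comultiplication formulas
  have K1 : ∀ α, comul (R := k) (Rc (B.coord α) c)
      = ∑ β ∈ s, Lc (B.coord β) (Rc (B.coord α) c) ⊗ₜ[k] B β := by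
    intro α
    rw [comul_Rc (B.coord α) c, he2', map_sum]
    exact Finset.sum_congr rfl fun β _ => by
      rw [LinearMap.rTensor_tmul, ← exchange]
  have K2 : ∀ β, comul (R := k) (Lc (B.coord β) c)
      = ∑ α ∈ s, B α ⊗ₜ[k] Lc (B.coord β) (Rc (B.coord α) c) := by
    intro β
    rw [comul_Lc (B.coord β) c, he1', map_sum]
    exact Finset.sum_congr rfl fun α _ => by rw [LinearMap.lTensor_tmul]
  -- `w α ∈ D` for `α ∈ s`
  have wmem : ∀ α ∈ s, Rc (B.coord α) c ∈ D := by
    intro α hα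
    have hwd : Rc (B.coord α) c
        = ∑ β ∈ s, counit (R := k) (B β) • Lc (B.coord β) (Rc (B.coord α) c) := by
      conv_lhs => rw [← rex_counit_comul (k := k) (Rc (B.coord α) c)]
      rw [K1 α, map_sum]
      exact Finset.sum_congr rfl fun β _ => by rw [rex_tmul]
    rw [hwd]
    exact Submodule.sum_mem _ fun β hβ =>
      Submodule.smul_mem _ _ (hdmem α hα β hβ)
  -- `c ∈ D`
  have cmem : c ∈ D := by
    have hcd : c = ∑ α ∈ s, counit (R := k) (B α) • Rc (B.coord α) c := by
      conv_lhs => rw [← lex_counit_comul (k := k) c]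
      rw [he1', map_sum]
      exact Finset.sum_congr rfl fun α _ => by rw [lex_tmul]
    rw [hcd]
    exact Submodule.sum_mem _ fun α hα => Submodule.smul_mem _ _ (wmem α hα)
  refine ⟨D, ?_, cmem, ?_⟩
  · exact FiniteDimensional.span_of_finite k
      (Set.Finite.image2 _ s.finite_toSet s.finite_toSet)
  · have key : D ≤ Submodule.comap (comul (R := k) (A := C))
        ((LinearMap.range (D.subtype.rTensor C)) ⊓
          (LinearMap.range (D.subtype.lTensor C))) := by
      rw [hD]
      apply Submodule.span_le.2
      rintro x ⟨α, hα, β, hβ, rfl⟩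
      rw [SetLike.mem_coe, Submodule.mem_comap, Submodule.mem_inf]
      dsimp only
      constructor
      · have hcd : comul (R := k) (Lc (B.coord β) (Rc (B.coord α) c))
            = ∑ β' ∈ s, Lc (B.coord β') (Rc (B.coord α) c)
                ⊗ₜ[k] Lc (B.coord β) (B β') := by
          rw [comul_Lc (B.coord β), K1 α, map_sum]
          exact Finset.sum_congr rfl fun β' _ => by rw [LinearMap.lTensor_tmul]
        rw [hcd]
        exact Submodule.sum_mem _ fun β' hβ' =>
          ⟨(⟨Lc (B.coord β') (Rc (B.coord α) c), hdmem α hα β' hβ'⟩ : D)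
              ⊗ₜ[k] Lc (B.coord β) (B β'), by rw [LinearMap.rTensor_tmul]; rfl⟩
      · have hex : Lc (B.coord β) (Rc (B.coord α) c)
            = Rc (B.coord α) (Lc (B.coord β) c) := exchange _ _ c
        have hcd : comul (R := k) (Lc (B.coord β) (Rc (B.coord α) c))
            = ∑ α' ∈ s, Rc (B.coord α) (B α')
                ⊗ₜ[k] Lc (B.coord β) (Rc (B.coord α') c) := by
          rw [hex, comul_Rc (B.coord α), K2 β, map_sum]
          exact Finset.sum_congr rfl fun α' _ => by rw [LinearMap.rTensor_tmul]
        rw [hcd]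
        exact Submodule.sum_mem _ fun α' hα' =>
          ⟨Rc (B.coord α) (B α')
              ⊗ₜ[k] (⟨Lc (B.coord β) (Rc (B.coord α') c), hdmem α' hα' β hβ⟩ : D), by
            rw [LinearMap.lTensor_tmul]; rfl⟩
    intro x hx
    exact mem_range_map (key hx).1 (key hx).2
end

section
/- Every element of a comodule D over a coalgebra C (over a field k) is contained in a finite-dimensional subcomodule of D. -/
open TensorProduct

noncomputable section AuxComod

variable {k C : Type*} [Field k] [AddCommGroup C] [Module k C]

/-- Coefficient extraction for tensors over a basis. -/
def coeffMap {ι : Type*} [DecidableEq ι] (b : Module.Basis ι k C) (N : Type*) [AddCommGroup N] [Module k N] :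
    C ⊗[k] N ≃ₗ[k] (ι →₀ N) :=
  (TensorProduct.congr b.repr (LinearEquiv.refl k N)).trans
    (TensorProduct.finsuppScalarLeft k N ι)

lemma coeffMap_tmul_apply {ι : Type*} [DecidableEq ι] (b : Module.Basis ι k C) {N : Type*} [AddCommGroup N] [Module k N]
    (c : C) (n : N) (j : ι) :
    coeffMap b N (c ⊗ₜ[k] n) j = b.repr c j • n := by
  simp [coeffMap, TensorProduct.finsuppScalarLeft_apply_tmul_apply]

lemma coeffMap_symm {ι : Type*} [DecidableEq ι] (b : Module.Basis ι k C) {N : Type*} [AddCommGroup N] [Module k N]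
    (f : ι →₀ N) : (coeffMap b N).symm f = f.sum fun i n => b i ⊗ₜ[k] n := by
  apply (coeffMap b N).injective
  rw [LinearEquiv.apply_symm_apply, map_finsuppSum]
  ext j
  rw [Finsupp.sum_apply]
  simp only [coeffMap_tmul_apply, Module.Basis.repr_self]
  rw [Finsupp.sum_eq_single j ?_ (by simp)]
  · simp
  · intro i _ hij; simp [Finsupp.single_apply, hij]

lemma tensor_eq_sum {ι : Type*} [DecidableEq ι] (b : Module.Basis ι k C) {N : Type*} [AddCommGroup N] [Module k N]
    (t : C ⊗[k] N) :
    t = ∑ i ∈ (coeffMap b N t).support, b i ⊗ₜ[k] (coeffMap b N t) i := by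
  conv_lhs => rw [← (coeffMap b N).symm_apply_apply t]
  rw [coeffMap_symm]
  rfl

end AuxComod

/-- Every element of a (left) comodule `D` over a coalgebra `C` over a field `k`
is contained in a finite-dimensional subcomodule of `D` (a subspace `D₀` with
`ρ(D₀) ⊆ C ⊗ D₀`). -/
theorem stmt_1 {k C D : Type*} [Field k] [AddCommGroup C] [Module k C] [Coalgebra k C]
    [AddCommGroup D] [Module k D]
    (ρ : D →ₗ[k] C ⊗[k] D)
    (hcoassoc : ∀ d : D,
      (TensorProduct.assoc k C C D)
          (TensorProduct.map (CoalgebraStruct.comul (R := k)) LinearMap.id (ρ d)) =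
        TensorProduct.map LinearMap.id ρ (ρ d))
    (hcounit : ∀ d : D,
      (TensorProduct.lid k D)
          (TensorProduct.map (CoalgebraStruct.counit (R := k)) LinearMap.id (ρ d)) = d)
    (d : D) :
    ∃ D₀ : Submodule k D, FiniteDimensional k D₀ ∧ d ∈ D₀ ∧
      ∀ x ∈ D₀, ρ x ∈
        LinearMap.range (TensorProduct.map (LinearMap.id : C →ₗ[k] C) D₀.subtype) := by
  classical
  set b := Module.Basis.ofVectorSpace k C with hb
  set f : _ →₀ D := coeffMap b D (ρ d) with hf
  set s := f.support with hs
  set D₀ : Submodule k D := Submodule.span k (insert d ↑(s.image f)) with hD₀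
  have hfin : FiniteDimensional k D₀ :=
    FiniteDimensional.span_of_finite k (Set.Finite.insert d (s.image f).finite_toSet)
  have hd : d ∈ D₀ := Submodule.subset_span (Set.mem_insert _ _)
  set R := LinearMap.range (TensorProduct.map (LinearMap.id : C →ₗ[k] C) D₀.subtype) with hR
  have hmemf : ∀ i, f i ∈ D₀ := by
    intro i
    by_cases h : i ∈ s
    · exact Submodule.subset_span
        (Set.mem_insert_of_mem _ (Finset.mem_coe.2 (Finset.mem_image_of_mem f h)))
    · rw [Finsupp.notMem_support_iff.1 h]; exact D₀.zero_mem
  -- tensors of the form c ⊗ x with x ∈ D₀ are in R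
  have htm : ∀ (c : C), ∀ x ∈ D₀, c ⊗ₜ[k] x ∈ R := by
    intro c x hx
    exact ⟨c ⊗ₜ[k] (⟨x, hx⟩ : D₀), by simp [TensorProduct.map_tmul]⟩
  have expand : ρ d = ∑ i ∈ s, b i ⊗ₜ[k] f i := tensor_eq_sum b (ρ d)
  have hρd : ρ d ∈ R := by
    rw [expand]
    exact Submodule.sum_mem R fun i _ => htm _ _ (hmemf i)
  -- coefficient extraction maps on C ⊗ (C ⊗ D)
  have hρf : ∀ j ∈ s, ρ (f j) ∈ R := by
    intro j hj
    set π : (C ⊗[k] (C ⊗[k] D)) →ₗ[k] C ⊗[k] D :=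
      (Finsupp.lapply j).comp (coeffMap b (C ⊗[k] D)).toLinearMap with hπ
    have hπtmul : ∀ (c : C) (u : C ⊗[k] D), π (c ⊗ₜ[k] u) = b.repr c j • u := by
      intro c u
      simp [hπ, coeffMap_tmul_apply]
    have hco := hcoassoc d
    have hL : π ((TensorProduct.assoc k C C D)
        (TensorProduct.map (CoalgebraStruct.comul (R := k)) LinearMap.id (ρ d))) ∈ R := by
      rw [expand, map_sum, map_sum, map_sum]
      refine Submodule.sum_mem R fun i _ => ?_
      rw [TensorProduct.map_tmul]
      simp only [LinearMap.id_coe, id_eq]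
      have : ∀ c : C ⊗[k] C,
          π ((TensorProduct.assoc k C C D) (c ⊗ₜ[k] (f i))) ∈ R := by
        intro c
        induction c using TensorProduct.induction_on with
        | zero =>
            rw [TensorProduct.zero_tmul, map_zero, map_zero]
            exact R.zero_mem
        | tmul x y =>
            rw [TensorProduct.assoc_tmul, hπtmul]
            exact R.smul_mem _ (htm _ _ (hmemf i))
        | add c₁ c₂ h₁ h₂ =>
            rw [TensorProduct.add_tmul, map_add, map_add]
            exact R.add_mem h₁ h₂
      exact this _
    have hRside : π (TensorProduct.map LinearMap.id ρ (ρ d)) = ρ (f j) := by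
      conv_lhs => rw [expand]
      rw [map_sum, map_sum]
      simp only [TensorProduct.map_tmul, LinearMap.id_coe, id_eq]
      rw [Finset.sum_congr rfl (fun i _ => hπtmul (b i) (ρ (f i)))]
      simp only [Module.Basis.repr_self]
      rw [Finset.sum_eq_single j (fun i _ hij => by
        rw [Finsupp.single_apply, if_neg hij, zero_smul]) (fun h => absurd hj h)]
      simp
    rw [← hRside, ← hco]
    exact hL
  refine ⟨D₀, hfin, hd, ?_⟩
  intro x hx
  refine Submodule.span_induction ?_ ?_ ?_ ?_ hx
  · intro y hy
    rcases Set.mem_insert_iff.1 hy with rfl | hy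
    · exact hρd
    · rcases Finset.mem_image.1 (Finset.mem_coe.1 hy) with ⟨j, hj, rfl⟩
      exact hρf j hj
  · simp
  · intro a c _ _ ha hc; rw [map_add]; exact R.add_mem ha hc
  · intro r a _ ha; rw [map_smul]; exact R.smul_mem r ha
end

section
/- Let A be a k-algebra, B ⊆ A a quasi-normal subalgebra, s : A → A an anti-automorphism with s(B) = B, and M a left A-module. Let M° = {α ∈ Hom_k(M, k) : α vanishes on some B-submodule N of M with M/N finite-dimensional}. Then the action (a • α)(m) = α(s(a)m) makes M° into a left A-module (in particular M° is stable under this A-action on Hom_k(M,k)). -/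
/-- A subalgebra `B ≤ A` is quasi-normal if for every `a ∈ A` there exist finitely
many `a₁, …, a_l` with `BaB = Σᵢ Baᵢ = Σᵢ aᵢB` as subspaces of `A`. -/
def QuasiNormal {k A : Type*} [Field k] [Ring A] [Algebra k A] (B : Subalgebra k A) :
    Prop :=
  ∀ a : A, ∃ (n : ℕ) (r : Fin n → A),
    (Subalgebra.toSubmodule B * Submodule.span k {a} * Subalgebra.toSubmodule B =
      ⨆ i : Fin n, Subalgebra.toSubmodule B * Submodule.span k {r i}) ∧
    (Subalgebra.toSubmodule B * Submodule.span k {a} * Subalgebra.toSubmodule B =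
      ⨆ i : Fin n, Submodule.span k {r i} * Subalgebra.toSubmodule B)

/-- The finite dual `M°` of `M` with respect to `B`: functionals vanishing on some
`B`-submodule of finite codimension. -/
def FinDual {k A : Type*} (M : Type*) [Field k] [Ring A] [Algebra k A]
    [AddCommGroup M] [Module k M] [Module A M] [IsScalarTower k A M]
    (B : Subalgebra k A) : Set (M →ₗ[k] k) :=
  {α | ∃ N : Submodule k M, (∀ b ∈ B, ∀ x ∈ N, b • x ∈ N) ∧
    N ≤ LinearMap.ker α ∧ FiniteDimensional k (M ⧸ N)}

set_option maxHeartbeats 1600000 in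
/-- If `B` is quasi-normal in `A`, `s` is an anti-automorphism of `A` with `s(B) = B`,
and `M` is an `A`-module, then `M°` is stable under the `A`-action
`(a • α)(m) = α(s(a)m)`, so it is an `A`-module. -/
theorem stmt_11 {k A M : Type*} [Field k] [Ring A] [Algebra k A]
    [AddCommGroup M] [Module k M] [Module A M] [IsScalarTower k A M] [SMulCommClass A k M]
    (B : Subalgebra k A) (hB : QuasiNormal B)
    (s : A →ₗ[k] A) (hanti : ∀ a b : A, s (a * b) = s b * s a) (hone : s 1 = 1)
    (hbij : Function.Bijective s)
    (hsB : (Subalgebra.toSubmodule B).map s = Subalgebra.toSubmodule B)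
    (a : A) (α : M →ₗ[k] k) (hα : α ∈ FinDual M B) :
    α ∘ₗ DistribMulAction.toLinearMap k M (s a) ∈ FinDual M B := by
  obtain ⟨n, r, h1, _h2⟩ := hB (s a)
  obtain ⟨N, hNB, hNker, hNfd⟩ := hα
  -- key: elements of ⨆ B • rᵢ act into N on vectors killed by all rᵢ
  have key : ∀ m : M, (∀ i, r i • m ∈ N) →
      ∀ x ∈ (⨆ i : Fin n, Subalgebra.toSubmodule B * Submodule.span k {r i}),
      x • m ∈ N := by
    intro m hm x hx
    let f : A →ₗ[k] M :=
      { toFun := fun y => y • m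
        map_add' := fun y z => add_smul y z m
        map_smul' := fun c y => smul_assoc c y m }
    have hle : (⨆ i : Fin n, Subalgebra.toSubmodule B * Submodule.span k {r i}) ≤
        N.comap f := by
      refine iSup_le fun i => Submodule.mul_le.2 fun b hb y hy => ?_
      obtain ⟨c, rfl⟩ := Submodule.mem_span_singleton.1 hy
      rw [Submodule.mem_comap]
      show (b * (c • r i)) • m ∈ N
      have heq : (b * (c • r i)) • m = b • (c • (r i • m)) := by
        rw [mul_smul, smul_assoc]
      rw [heq]
      exact hNB b hb _ (N.smul_mem c (hm i))
    exact hle hx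
  -- B * B ≤ B as submodules
  have hBB : Subalgebra.toSubmodule B * Subalgebra.toSubmodule B ≤
      Subalgebra.toSubmodule B :=
    Submodule.mul_le.2 fun x hx y hy => B.mul_mem hx hy
  have h1mem : (1 : A) ∈ Subalgebra.toSubmodule B := B.one_mem
  -- the new submodule
  let N' : Submodule k M :=
    N.comap (DistribMulAction.toLinearMap k M (s a)) ⊓
      ⨅ i : Fin n, N.comap (DistribMulAction.toLinearMap k M (r i))
  have memN' : ∀ m : M, m ∈ N' ↔ (s a • m ∈ N ∧ ∀ i, r i • m ∈ N) := by
    intro m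
    constructor
    · rintro ⟨hm1, hm2⟩
      exact ⟨hm1, fun i => (Submodule.mem_iInf _).1 hm2 i⟩
    · rintro ⟨hm1, hm2⟩
      exact ⟨hm1, (Submodule.mem_iInf _).2 hm2⟩
  refine ⟨N', ?_, ?_, ?_⟩
  · -- B-stability
    intro b hb m hm
    rw [memN'] at hm ⊢
    obtain ⟨hm1, hm2⟩ := hm
    constructor
    · have hmem : s a * b ∈
          Subalgebra.toSubmodule B * Submodule.span k {s a} * Subalgebra.toSubmodule B := by
        refine Submodule.mul_mem_mul ?_ hb
        simpa using Submodule.mul_mem_mul h1mem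
          (Submodule.mem_span_singleton_self (s a))
      rw [h1] at hmem
      have := key m hm2 _ hmem
      rwa [mul_smul] at this
    · intro i
      have hri : r i ∈
          Subalgebra.toSubmodule B * Submodule.span k {s a} * Subalgebra.toSubmodule B := by
        rw [h1]
        refine Submodule.mem_iSup_of_mem i ?_
        simpa using Submodule.mul_mem_mul h1mem
          (Submodule.mem_span_singleton_self (r i))
      have hmem : r i * b ∈
          Subalgebra.toSubmodule B * Submodule.span k {s a} * Subalgebra.toSubmodule B := by
        have h' : r i * b ∈
            (Subalgebra.toSubmodule B * Submodule.span k {s a} * Subalgebra.toSubmodule B) *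
              Subalgebra.toSubmodule B :=
          Submodule.mul_mem_mul hri hb
        refine Submodule.mul_le.2 (fun x hx y hy => ?_) h'
        refine Submodule.mul_induction_on hx (fun p hp q hq => ?_) (fun u v hu hv => ?_)
        · rw [mul_assoc p q y]
          exact Submodule.mul_mem_mul hp (B.mul_mem hq hy)
        · rw [add_mul]
          exact add_mem hu hv
      rw [h1] at hmem
      have := key m hm2 _ hmem
      rwa [mul_smul] at this
  · -- contained in kernel
    intro m hm
    rw [memN'] at hm
    simp only [LinearMap.mem_ker, LinearMap.comp_apply, DistribSMul.toLinearMap_apply]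
    exact hNker hm.1
  · -- finite codimension
    have : FiniteDimensional k (M ⧸ N) := hNfd
    let Φ : M →ₗ[k] (M ⧸ N) × (Fin n → M ⧸ N) :=
      LinearMap.prod (N.mkQ ∘ₗ DistribMulAction.toLinearMap k M (s a))
        (LinearMap.pi fun i => N.mkQ ∘ₗ DistribMulAction.toLinearMap k M (r i))
    have hker : N' = LinearMap.ker Φ := by
      ext m
      rw [memN']
      simp [Φ, LinearMap.mem_ker, Prod.ext_iff, funext_iff,
        Submodule.Quotient.mk_eq_zero]
      exact Iff.rfl
    rw [hker]
    exact (LinearMap.quotKerEquivRange Φ).symm.finiteDimensional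
end

section
/- Let A be a k-algebra and M an A-module. Then the set M* = {μ : M → k linear : ker μ contains an A-submodule W with dim_k(M/W) < ∞} is a submodule of Hom_k(M, k) under the action (a·μ)(m) = μ(am), and every element of M* is contained in a finite-dimensional A^op-submodule of M* (M* is locally finite). -/
/-- `M* = {μ : M → k : ker μ contains an A-submodule of finite codimension}`. -/
def MStar {k A : Type*} (M : Type*) [Field k] [Ring A] [Algebra k A]
    [AddCommGroup M] [Module k M] [Module A M] [IsScalarTower k A M] :
    Set (M →ₗ[k] k) :=
  {μ | ∃ W : Submodule k M, (∀ (a : A), ∀ x ∈ W, a • x ∈ W) ∧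
    W ≤ LinearMap.ker μ ∧ FiniteDimensional k (M ⧸ W)}

lemma quot_inf_findim {k M : Type*} [Field k] [AddCommGroup M] [Module k M]
    (W₁ W₂ : Submodule k M) [FiniteDimensional k (M ⧸ W₁)]
    [FiniteDimensional k (M ⧸ W₂)] : FiniteDimensional k (M ⧸ (W₁ ⊓ W₂)) := by
  have hker : LinearMap.ker ((W₁.mkQ).prod (W₂.mkQ)) = W₁ ⊓ W₂ := by
    rw [LinearMap.ker_prod, Submodule.ker_mkQ, Submodule.ker_mkQ]
  have hinj : Function.Injective
      ((W₁ ⊓ W₂).liftQ ((W₁.mkQ).prod (W₂.mkQ)) hker.ge) := by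
    rw [← LinearMap.ker_eq_bot, Submodule.ker_liftQ_eq_bot _ _ _ hker.le]
  exact FiniteDimensional.of_injective _ hinj

/-- `M*` is a submodule of `Hom_k(M,k)` under the action `(a·μ)(m) = μ(am)`, and every
element of `M*` lies in a finite-dimensional `Aᵒᵖ`-submodule of `M*` (`M*` is locally
finite). -/
theorem stmt_12 {k A M : Type*} [Field k] [Ring A] [Algebra k A]
    [AddCommGroup M] [Module k M] [Module A M] [IsScalarTower k A M]
    [SMulCommClass A k M] :
    (0 ∈ MStar (k := k) (A := A) M) ∧
    (∀ μ ν : M →ₗ[k] k, μ ∈ MStar (A := A) M → ν ∈ MStar (A := A) M →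
      μ + ν ∈ MStar (A := A) M) ∧
    (∀ (r : k) (μ : M →ₗ[k] k), μ ∈ MStar (A := A) M → r • μ ∈ MStar (A := A) M) ∧
    (∀ (a : A) (μ : M →ₗ[k] k), μ ∈ MStar (A := A) M →
      μ ∘ₗ DistribMulAction.toLinearMap k M a ∈ MStar (A := A) M) ∧
    (∀ μ : M →ₗ[k] k, μ ∈ MStar (A := A) M →
      ∃ V : Submodule k (M →ₗ[k] k), FiniteDimensional k V ∧ μ ∈ V ∧
        (V : Set (M →ₗ[k] k)) ⊆ MStar (A := A) M ∧
        ∀ (a : A), ∀ ν ∈ V, ν ∘ₗ DistribMulAction.toLinearMap k M a ∈ V) := by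
  refine ⟨?_, ?_, ?_, ?_, ?_⟩
  · refine ⟨⊤, fun a x _ => trivial, by simp, ?_⟩
    have : Subsingleton (M ⧸ (⊤ : Submodule k M)) :=
      Submodule.Quotient.subsingleton_iff.mpr rfl
    infer_instance
  · rintro μ ν ⟨W₁, h₁, hk₁, hf₁⟩ ⟨W₂, h₂, hk₂, hf₂⟩
    refine ⟨W₁ ⊓ W₂, fun a x hx => ⟨h₁ a x hx.1, h₂ a x hx.2⟩, ?_, quot_inf_findim W₁ W₂⟩
    intro x hx
    simp [LinearMap.mem_ker.mp (hk₁ hx.1), LinearMap.mem_ker.mp (hk₂ hx.2)]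
  · rintro r μ ⟨W, h, hk, hf⟩
    refine ⟨W, h, ?_, hf⟩
    intro x hx
    simp [LinearMap.mem_ker.mp (hk hx)]
  · rintro a μ ⟨W, h, hk, hf⟩
    refine ⟨W, h, ?_, hf⟩
    intro x hx
    exact LinearMap.mem_ker.mp (hk (h a x hx))
  · rintro μ ⟨W, h, hk, hf⟩
    refine ⟨W.dualAnnihilator, ?_, ?_, ?_, ?_⟩
    · haveI := hf
      exact W.dualQuotEquivDualAnnihilator.finiteDimensional
    · exact (Submodule.mem_dualAnnihilator μ).mpr fun w hw => hk hw
    · rintro ν hν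
      exact ⟨W, h, fun x hx => (Submodule.mem_dualAnnihilator ν).mp hν x hx, hf⟩
    · intro a ν hν
      rw [Submodule.mem_dualAnnihilator]
      intro w hw
      exact (Submodule.mem_dualAnnihilator ν).mp hν _ (h a w hw)
end
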